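/- The RDP bound for the geometric mechanism converges to pure DP as α → ∞: for fixed ε > 0, the quantity τ(α,ε) = (1/(α-1))·log[ ((e^ε−1)/(e^ε+1)) · ( (2α/(ε(2α−1)))·e^{(α−1)ε} + (2(α−1)/(ε(2α−1)))·e^{−αε} ) ] satisfies lim_{α→∞} τ(α,ε) = ε, and τ(α,ε) ≤ ε for all α > 1. -/

import Mathlib

open Real Filter

lemma key_ineq {x : ℝ} (hx : 0 ≤ x) : 2 * (Real.exp x - 1) ≤ x * (Real.exp x + 1) := by
  have hg : ∀ y ∈ Set.Ici (0:ℝ), 0 ≤ (y - 1) * Real.exp y + 1 := by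
    have hmono : MonotoneOn (fun y : ℝ => (y - 1) * Real.exp y + 1) (Set.Ici 0) := by
      apply monotoneOn_of_deriv_nonneg (convex_Ici 0)
      · fun_prop
      · fun_prop
      · intro y hy
        have : deriv (fun y : ℝ => (y - 1) * Real.exp y + 1) y = y * Real.exp y := by
          simp [mul_comm]; ring
        rw [this]
        simp only [interior_Ici, Set.mem_Ioi] at hy
        positivity
    intro y hy
    have := hmono (Set.self_mem_Ici) hy (Set.mem_Ici.mp hy)
    simpa using this
  have hf : MonotoneOn (fun y : ℝ => y * (Real.exp y + 1) - 2 * (Real.exp y - 1)) (Set.Ici 0) := by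
    apply monotoneOn_of_deriv_nonneg (convex_Ici 0)
    · fun_prop
    · fun_prop
    · intro y hy
      have H : HasDerivAt (fun y : ℝ => y * (Real.exp y + 1) - 2 * (Real.exp y - 1))
          ((Real.exp y + 1) * 1 + Real.exp y * y - 2 * Real.exp y) y := by
        have := ((hasDerivAt_id y).mul ((Real.hasDerivAt_exp y).add_const 1)).sub
          (((Real.hasDerivAt_exp y).sub_const 1).const_mul 2)
        simpa [mul_comm, Pi.mul_def, Pi.sub_def] using this
      rw [H.deriv]
      have : (Real.exp y + 1) * 1 + Real.exp y * y - 2 * Real.exp y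
          = (y - 1) * Real.exp y + 1 := by ring
      rw [this]
      exact hg y (le_of_lt (by simpa using hy))
  have := hf Set.self_mem_Ici (Set.mem_Ici.mpr hx) hx
  simp at this
  linarith

/-- The RDP parameter `τ(α, ε)` of the base geometric mechanism with
pure-DP parameter `ε`. -/
noncomputable def tauGeom (α ε : ℝ) : ℝ :=
  (α - 1)⁻¹ * Real.log
    (((Real.exp ε - 1) / (Real.exp ε + 1)) *
      ((2 * α / (ε * (2 * α - 1))) * Real.exp ((α - 1) * ε) +
        (2 * (α - 1) / (ε * (2 * α - 1))) * Real.exp (-α * ε)))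

/-- The RDP bound of the geometric mechanism converges to the pure-DP loss as
`α → ∞`, and is at most `ε` for all `α > 1`. -/
theorem tauGeom_tendsto_and_le (ε : ℝ) (hε : 0 < ε) :
    Tendsto (fun α => tauGeom α ε) atTop (nhds ε) ∧
    ∀ α : ℝ, 1 < α → tauGeom α ε ≤ ε := by
  set c : ℝ := (Real.exp ε - 1) / (Real.exp ε + 1) with hc_def
  have hexp1 : (1:ℝ) < Real.exp ε := by
    have := Real.exp_lt_exp.mpr hε
    simpa using this
  have hden0 : (0:ℝ) < Real.exp ε + 1 := by linarith
  have hc : 0 < c := div_pos (by linarith) hden0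
  have hcε : c ≤ ε / 2 := by
    rw [hc_def, div_le_iff₀ hden0]
    have := key_ineq hε.le
    linarith
  -- the upper bound part
  have hle : ∀ α : ℝ, 1 < α → tauGeom α ε ≤ ε := by
    intro α hα
    have hα1 : (0:ℝ) < α - 1 := by linarith
    have h2α : (0:ℝ) < 2 * α - 1 := by linarith
    have hD : (0:ℝ) < ε * (2 * α - 1) := by positivity
    set A : ℝ := 2 * α / (ε * (2 * α - 1)) with hA_def
    set B : ℝ := 2 * (α - 1) / (ε * (2 * α - 1)) with hB_def
    have hA : 0 < A := by positivity
    have hB : 0 < B := by positivity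
    have hAB : A + B = 2 / ε := by
      rw [hA_def, hB_def]
      field_simp
      ring
    set I : ℝ := c * (A * Real.exp ((α - 1) * ε) + B * Real.exp (-α * ε)) with hI_def
    have hI : 0 < I := by positivity
    have hEsplit : Real.exp (-α * ε) = Real.exp ((α - 1) * ε) * Real.exp (-(2 * α - 1) * ε) := by
      rw [← Real.exp_add]; ring_nf
    have hsmall : Real.exp (-(2 * α - 1) * ε) ≤ 1 := by
      rw [Real.exp_le_one_iff]
      nlinarith
    have hIle : I ≤ Real.exp ((α - 1) * ε) := by
      have hEpos : 0 < Real.exp ((α - 1) * ε) := Real.exp_pos _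
      have h1 : I = (c * A + c * B * Real.exp (-(2 * α - 1) * ε)) * Real.exp ((α - 1) * ε) := by
        rw [hI_def, hEsplit]; ring
      rw [h1]
      have h2 : c * A + c * B * Real.exp (-(2 * α - 1) * ε) ≤ c * (A + B) := by
        have := mul_le_of_le_one_right (mul_pos hc hB).le hsmall
        nlinarith
      have h3 : c * (A + B) ≤ 1 := by
        rw [hAB]
        have h : c * (2 / ε) = 2 * c / ε := by ring
        rw [h, div_le_one hε]
        rw [le_div_iff₀ (by norm_num : (0:ℝ) < 2)] at hcε
        linarith
      nlinarith
    have hlog : Real.log I ≤ (α - 1) * ε := by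
      rw [Real.log_le_iff_le_exp hI]
      exact hIle
    have : tauGeom α ε = (α - 1)⁻¹ * Real.log I := rfl
    rw [this]
    calc (α - 1)⁻¹ * Real.log I ≤ (α - 1)⁻¹ * ((α - 1) * ε) :=
          mul_le_mul_of_nonneg_left hlog (inv_nonneg.mpr hα1.le)
      _ = ε := by field_simp
  refine ⟨?_, hle⟩
  -- lower bound function
  set L : ℝ → ℝ := fun α => ε + (α - 1)⁻¹ * Real.log (c * (2 * α / (ε * (2 * α - 1)))) with hL_def
  have hL_tendsto : Tendsto L atTop (nhds ε) := by
    have h1 : Tendsto (fun α : ℝ => (α - 1)⁻¹) atTop (nhds 0) := by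
      apply tendsto_inv_atTop_zero.comp
      exact tendsto_atTop_add_const_right atTop (-1) tendsto_id
    have h2 : Tendsto (fun α : ℝ => c * (2 * α / (ε * (2 * α - 1)))) atTop
        (nhds (c * (1 / ε))) := by
      apply Tendsto.const_mul
      have heq : ∀ᶠ α : ℝ in atTop, (1 / ε) * (1 + 1 / (2 * α - 1)) = 2 * α / (ε * (2 * α - 1)) := by
        filter_upwards [eventually_gt_atTop (1:ℝ)] with α hα
        have h2α : (2 * α - 1) ≠ 0 := by nlinarith
        field_simp
        ring
      apply Tendsto.congr' heq
      have h3 : Tendsto (fun α : ℝ => 1 / (2 * α - 1)) atTop (nhds 0) := by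
        simp only [one_div]
        apply tendsto_inv_atTop_zero.comp
        apply tendsto_atTop_add_const_right
        exact (tendsto_id.const_mul_atTop (by norm_num : (0:ℝ) < 2))
      have h4 : Tendsto (fun α : ℝ => (1/ε) * (1 + 1 / (2 * α - 1))) atTop
          (nhds ((1/ε) * (1 + 0))) := (tendsto_const_nhds.add h3).const_mul _
      simpa using h4
    have hne : c * (1 / ε) ≠ 0 := by positivity
    have h3 : Tendsto (fun α : ℝ => Real.log (c * (2 * α / (ε * (2 * α - 1))))) atTop
        (nhds (Real.log (c * (1 / ε)))) :=
      (Real.continuousAt_log hne).tendsto.comp h2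
    have h4 : Tendsto (fun α : ℝ => (α - 1)⁻¹ * Real.log (c * (2 * α / (ε * (2 * α - 1)))))
        atTop (nhds (0 * Real.log (c * (1 / ε)))) := h1.mul h3
    rw [zero_mul] at h4
    have h5 := (tendsto_const_nhds (x := ε) (f := atTop (α := ℝ))).add h4
    rw [add_zero] at h5
    exact h5
  apply tendsto_of_tendsto_of_tendsto_of_le_of_le' hL_tendsto tendsto_const_nhds
  · -- L ≤ tauGeom eventually
    filter_upwards [eventually_gt_atTop (1:ℝ)] with α hα
    have hα1 : (0:ℝ) < α - 1 := by linarith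
    have h2α : (0:ℝ) < 2 * α - 1 := by linarith
    have hD : (0:ℝ) < ε * (2 * α - 1) := by positivity
    set A : ℝ := 2 * α / (ε * (2 * α - 1)) with hA_def
    set B : ℝ := 2 * (α - 1) / (ε * (2 * α - 1)) with hB_def
    have hA : 0 < A := by positivity
    have hB : 0 < B := by positivity
    set I : ℝ := c * (A * Real.exp ((α - 1) * ε) + B * Real.exp (-α * ε)) with hI_def
    have hlow : c * A * Real.exp ((α - 1) * ε) ≤ I := by
      rw [hI_def]
      have : 0 < B * Real.exp (-α * ε) := by positivity
      nlinarith
    have hlowpos : 0 < c * A * Real.exp ((α - 1) * ε) := by positivity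
    have hloglow : Real.log (c * A) + (α - 1) * ε ≤ Real.log I := by
      have h1 : Real.log (c * A * Real.exp ((α - 1) * ε)) ≤ Real.log I :=
        Real.log_le_log hlowpos hlow
      rwa [Real.log_mul (by positivity) (Real.exp_ne_zero _), Real.log_exp] at h1
    have : tauGeom α ε = (α - 1)⁻¹ * Real.log I := rfl
    rw [hL_def, this]
    have := mul_le_mul_of_nonneg_left hloglow (inv_nonneg.mpr hα1.le)
    calc ε + (α - 1)⁻¹ * Real.log (c * A)
        = (α - 1)⁻¹ * (Real.log (c * A) + (α - 1) * ε) := by field_simp; ring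
      _ ≤ (α - 1)⁻¹ * Real.log I := this
  · filter_upwards [eventually_gt_atTop (1:ℝ)] with α hα
    exact hle α hα
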